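/- Let R be an associative ring with additive subgroups R₀ and R₁ such that R = R₀ ⊕ R₁ as an internal direct sum of abelian groups and R_iR_j ⊆ R_{i+j mod 2} for i,j ∈ {0,1}. Define the Lie super-central series by Γ_1 = R and Γ_{n+1} = the additive subgroup generated by all super-commutators ab − (−1)^{ij}ba with a ∈ Γ_n ∩ R_i, b ∈ R_j, i,j ∈ {0,1}. If Γ_{c+1} = 0 for some c ≥ 1, then δ_c(R) ⊆ R₀, and consequently R is Lie solvable: δ_m(R) = 0 for some m, where δ_0(R) = R and δ_{n+1}(R) is the additive subgroup generated by all ab − ba with a,b ∈ δ_n(R). -/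
import Mathlib


/-- The Lie derived series of an associative ring: `δ 0 = R` and `δ (n+1)` is the additive
subgroup generated by all commutators `[a,b] = a*b - b*a` with `a, b ∈ δ n`. -/
def lieDerivedSeries (R : Type*) [Ring R] : ℕ → AddSubgroup R
  | 0 => ⊤
  | n + 1 => AddSubgroup.closure
      {x : R | ∃ a ∈ lieDerivedSeries R n, ∃ b ∈ lieDerivedSeries R n, x = a * b - b * a}

/-- The Lie super-central series of a `ℤ₂`-graded associative ring, indexed so that
`superCentral R₀ R₁ n = Γ_{n+1}`: `Γ₁ = R` and `Γ_{n+1}` is the additive subgroup generated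
by all super-commutators `a*b - (-1)^{ij} b*a` with `a ∈ Γ_n ∩ R_i`, `b ∈ R_j`. -/
def superCentral {R : Type*} [Ring R] (R₀ R₁ : AddSubgroup R) : ℕ → AddSubgroup R
  | 0 => ⊤
  | n + 1 => AddSubgroup.closure
      {x : R | ∃ a ∈ superCentral R₀ R₁ n, ∃ b : R,
        (a ∈ R₀ ∧ (b ∈ R₀ ∨ b ∈ R₁) ∧ x = a * b - b * a) ∨
        (a ∈ R₁ ∧ b ∈ R₀ ∧ x = a * b - b * a) ∨
        (a ∈ R₁ ∧ b ∈ R₁ ∧ x = a * b + b * a)}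

section Aux

variable {R : Type*} [Ring R] {R₀ R₁ : AddSubgroup R}

lemma sc_succ (n : ℕ) : superCentral R₀ R₁ (n + 1) = AddSubgroup.closure
      {x : R | ∃ a ∈ superCentral R₀ R₁ n, ∃ b : R,
        (a ∈ R₀ ∧ (b ∈ R₀ ∨ b ∈ R₁) ∧ x = a * b - b * a) ∨
        (a ∈ R₁ ∧ b ∈ R₀ ∧ x = a * b - b * a) ∨
        (a ∈ R₁ ∧ b ∈ R₁ ∧ x = a * b + b * a)} := rfl

lemma lds_succ (n : ℕ) : lieDerivedSeries R (n + 1) = AddSubgroup.closure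
      {x : R | ∃ a ∈ lieDerivedSeries R n, ∃ b ∈ lieDerivedSeries R n, x = a * b - b * a} := rfl

lemma sc_gen₁ {n : ℕ} {a b : R} (ha : a ∈ superCentral R₀ R₁ n) (ha0 : a ∈ R₀)
    (hb : b ∈ R₀ ∨ b ∈ R₁) : a * b - b * a ∈ superCentral R₀ R₁ (n + 1) := by
  rw [sc_succ]
  exact AddSubgroup.subset_closure ⟨a, ha, b, Or.inl ⟨ha0, hb, rfl⟩⟩

lemma sc_gen₂ {n : ℕ} {a b : R} (ha : a ∈ superCentral R₀ R₁ n) (ha1 : a ∈ R₁)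
    (hb : b ∈ R₀) : a * b - b * a ∈ superCentral R₀ R₁ (n + 1) := by
  rw [sc_succ]
  exact AddSubgroup.subset_closure ⟨a, ha, b, Or.inr (Or.inl ⟨ha1, hb, rfl⟩)⟩

lemma sc_gen₃ {n : ℕ} {a b : R} (ha : a ∈ superCentral R₀ R₁ n) (ha1 : a ∈ R₁)
    (hb : b ∈ R₁) : a * b + b * a ∈ superCentral R₀ R₁ (n + 1) := by
  rw [sc_succ]
  exact AddSubgroup.subset_closure ⟨a, ha, b, Or.inr (Or.inr ⟨ha1, hb, rfl⟩)⟩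

/-- Each `superCentral n` is a graded (homogeneous) subgroup. -/
lemma sc_graded (hsup : R₀ ⊔ R₁ = ⊤)
    (h00 : ∀ a ∈ R₀, ∀ b ∈ R₀, a * b ∈ R₀)
    (h01 : ∀ a ∈ R₀, ∀ b ∈ R₁, a * b ∈ R₁)
    (h10 : ∀ a ∈ R₁, ∀ b ∈ R₀, a * b ∈ R₁)
    (h11 : ∀ a ∈ R₁, ∀ b ∈ R₁, a * b ∈ R₀) (n : ℕ) :
    superCentral R₀ R₁ n ≤ (superCentral R₀ R₁ n ⊓ R₀) ⊔ (superCentral R₀ R₁ n ⊓ R₁) := by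
  cases n with
  | zero =>
      show (⊤ : AddSubgroup R) ≤ ((⊤ : AddSubgroup R) ⊓ R₀) ⊔ ((⊤ : AddSubgroup R) ⊓ R₁)
      simp [hsup]
  | succ n =>
      conv_lhs => rw [sc_succ]
      rw [AddSubgroup.closure_le]
      rintro x ⟨a, ha, b, hcase⟩
      rcases hcase with ⟨ha0, hb01, rfl⟩ | ⟨ha1, hb0, rfl⟩ | ⟨ha1, hb1, rfl⟩
      · rcases hb01 with hb0 | hb1
        · exact AddSubgroup.mem_sup_left <| AddSubgroup.mem_inf.2
            ⟨sc_gen₁ ha ha0 (Or.inl hb0), sub_mem (h00 a ha0 b hb0) (h00 b hb0 a ha0)⟩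
        · exact AddSubgroup.mem_sup_right <| AddSubgroup.mem_inf.2
            ⟨sc_gen₁ ha ha0 (Or.inr hb1), sub_mem (h01 a ha0 b hb1) (h10 b hb1 a ha0)⟩
      · exact AddSubgroup.mem_sup_right <| AddSubgroup.mem_inf.2
          ⟨sc_gen₂ ha ha1 hb0, sub_mem (h10 a ha1 b hb0) (h01 b hb0 a ha1)⟩
      · exact AddSubgroup.mem_sup_left <| AddSubgroup.mem_inf.2
          ⟨sc_gen₃ ha ha1 hb1, add_mem (h11 a ha1 b hb1) (h11 b hb1 a ha1)⟩

/-- Key lemma: ordinary commutators of `superCentral n` with `R` land in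
`superCentral (n+1) ⊔ R₀`. -/
lemma sc_key (hsup : R₀ ⊔ R₁ = ⊤)
    (h00 : ∀ a ∈ R₀, ∀ b ∈ R₀, a * b ∈ R₀)
    (h01 : ∀ a ∈ R₀, ∀ b ∈ R₁, a * b ∈ R₁)
    (h10 : ∀ a ∈ R₁, ∀ b ∈ R₀, a * b ∈ R₁)
    (h11 : ∀ a ∈ R₁, ∀ b ∈ R₁, a * b ∈ R₀)
    (n : ℕ) {g : R} (hg : g ∈ superCentral R₀ R₁ n) (x : R) :
    g * x - x * g ∈ superCentral R₀ R₁ (n + 1) ⊔ R₀ := by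
  obtain ⟨g₀, hg₀, g₁, hg₁, hgsum⟩ :=
    AddSubgroup.mem_sup.1 (sc_graded hsup h00 h01 h10 h11 n hg)
  have hx : x ∈ R₀ ⊔ R₁ := by rw [hsup]; trivial
  obtain ⟨x₀, hx₀, x₁, hx₁, hxsum⟩ := AddSubgroup.mem_sup.1 hx
  have e : g * x - x * g = (g₀ * x₀ - x₀ * g₀) + (g₀ * x₁ - x₁ * g₀) + (g₁ * x₀ - x₀ * g₁)
      + ((g₁ * x₁ + x₁ * g₁) - (x₁ * g₁ + x₁ * g₁)) := by
    rw [← hgsum, ← hxsum]; noncomm_ring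
  rw [e]
  refine add_mem (add_mem (add_mem ?_ ?_) ?_) (sub_mem ?_ ?_)
  · exact AddSubgroup.mem_sup_left (sc_gen₁ hg₀.1 hg₀.2 (Or.inl hx₀))
  · exact AddSubgroup.mem_sup_left (sc_gen₁ hg₀.1 hg₀.2 (Or.inr hx₁))
  · exact AddSubgroup.mem_sup_left (sc_gen₂ hg₁.1 hg₁.2 hx₀)
  · exact AddSubgroup.mem_sup_left (sc_gen₃ hg₁.1 hg₁.2 hx₁)
  · exact AddSubgroup.mem_sup_right
      (add_mem (h11 x₁ hx₁ g₁ hg₁.2) (h11 x₁ hx₁ g₁ hg₁.2))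

/-- The derived series is dominated by `superCentral ⊔ R₀`. -/
lemma lds_le_sc (hsup : R₀ ⊔ R₁ = ⊤)
    (h00 : ∀ a ∈ R₀, ∀ b ∈ R₀, a * b ∈ R₀)
    (h01 : ∀ a ∈ R₀, ∀ b ∈ R₁, a * b ∈ R₁)
    (h10 : ∀ a ∈ R₁, ∀ b ∈ R₀, a * b ∈ R₁)
    (h11 : ∀ a ∈ R₁, ∀ b ∈ R₁, a * b ∈ R₀) :
    ∀ n : ℕ, lieDerivedSeries R n ≤ superCentral R₀ R₁ n ⊔ R₀
  | 0 => by
      show (⊤ : AddSubgroup R) ≤ (⊤ : AddSubgroup R) ⊔ R₀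
      simp
  | n + 1 => by
      rw [lds_succ, AddSubgroup.closure_le]
      rintro x ⟨a, ha, b, hb, rfl⟩
      obtain ⟨g, hg, r, hr, hgr⟩ :=
        AddSubgroup.mem_sup.1 (lds_le_sc hsup h00 h01 h10 h11 n ha)
      obtain ⟨h, hh, s, hs, hhs⟩ :=
        AddSubgroup.mem_sup.1 (lds_le_sc hsup h00 h01 h10 h11 n hb)
      have e : a * b - b * a =
          (g * b - b * g) - (h * r - r * h) + (r * s - s * r) := by
        rw [← hgr, ← hhs]; noncomm_ring
      rw [e]
      refine add_mem (sub_mem ?_ ?_) ?_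
      · exact sc_key hsup h00 h01 h10 h11 n hg b
      · exact sc_key hsup h00 h01 h10 h11 n hh r
      · exact AddSubgroup.mem_sup_right
          (sub_mem (h00 r hr s hs) (h00 s hs r hr))

/-- The lower central series of `R₀` under the ordinary commutator. -/
def evenLCS {R : Type*} [Ring R] (R₀ : AddSubgroup R) : ℕ → AddSubgroup R
  | 0 => R₀
  | k + 1 => AddSubgroup.closure
      {x : R | ∃ a ∈ evenLCS R₀ k, ∃ b ∈ R₀, x = a * b - b * a}

/-- The derived series of `R₀` under the ordinary commutator. -/
def evenDer {R : Type*} [Ring R] (R₀ : AddSubgroup R) : ℕ → AddSubgroup R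
  | 0 => R₀
  | k + 1 => AddSubgroup.closure
      {x : R | ∃ a ∈ evenDer R₀ k, ∃ b ∈ evenDer R₀ k, x = a * b - b * a}

lemma evenLCS_le (h00 : ∀ a ∈ R₀, ∀ b ∈ R₀, a * b ∈ R₀) :
    ∀ k : ℕ, evenLCS R₀ k ≤ superCentral R₀ R₁ k ⊓ R₀
  | 0 => by
      show R₀ ≤ (⊤ : AddSubgroup R) ⊓ R₀
      simp
  | k + 1 => by
      show AddSubgroup.closure _ ≤ _
      rw [AddSubgroup.closure_le]
      rintro x ⟨a, ha, b, hb, rfl⟩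
      obtain ⟨haS, ha0⟩ := evenLCS_le h00 k ha
      exact AddSubgroup.mem_inf.2 ⟨sc_gen₁ haS ha0 (Or.inl hb), sub_mem (h00 a ha0 b hb) (h00 b hb a ha0)⟩

lemma evenLCS_le_R₀ (h00 : ∀ a ∈ R₀, ∀ b ∈ R₀, a * b ∈ R₀) :
    ∀ k : ℕ, evenLCS R₀ k ≤ R₀
  | 0 => le_rfl
  | k + 1 => by
      show AddSubgroup.closure _ ≤ _
      rw [AddSubgroup.closure_le]
      rintro x ⟨a, ha, b, hb, rfl⟩
      have ha0 := evenLCS_le_R₀ h00 k ha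
      exact sub_mem (h00 a ha0 b hb) (h00 b hb a ha0)

lemma evenDer_le (h00 : ∀ a ∈ R₀, ∀ b ∈ R₀, a * b ∈ R₀) :
    ∀ k : ℕ, evenDer R₀ k ≤ evenLCS R₀ k
  | 0 => le_rfl
  | k + 1 => by
      show AddSubgroup.closure _ ≤ AddSubgroup.closure _
      apply AddSubgroup.closure_mono
      rintro x ⟨a, ha, b, hb, rfl⟩
      exact ⟨a, evenDer_le h00 k ha, b,
        evenLCS_le_R₀ h00 k (evenDer_le h00 k hb), rfl⟩

end Aux

/-- If `R = R₀ ⊕ R₁` is a `ℤ₂`-graded associative ring whose Lie super-central series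
satisfies `Γ_{c+1} = 0` for some `c ≥ 1`, then `δ_c(R) ⊆ R₀`; consequently `R` is Lie
solvable. -/
theorem stmt_10 (R : Type*) [Ring R] (R₀ R₁ : AddSubgroup R)
    (hsup : R₀ ⊔ R₁ = ⊤) (hdisj : R₀ ⊓ R₁ = ⊥)
    (h00 : ∀ a ∈ R₀, ∀ b ∈ R₀, a * b ∈ R₀)
    (h01 : ∀ a ∈ R₀, ∀ b ∈ R₁, a * b ∈ R₁)
    (h10 : ∀ a ∈ R₁, ∀ b ∈ R₀, a * b ∈ R₁)
    (h11 : ∀ a ∈ R₁, ∀ b ∈ R₁, a * b ∈ R₀)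
    (c : ℕ) (hc : 1 ≤ c) (hΓ : superCentral R₀ R₁ c = ⊥) :
    lieDerivedSeries R c ≤ R₀ ∧ ∃ m : ℕ, lieDerivedSeries R m = ⊥ := by
  have part1 : lieDerivedSeries R c ≤ R₀ := by
    have := lds_le_sc hsup h00 h01 h10 h11 c
    rwa [hΓ, bot_sup_eq] at this
  refine ⟨part1, c + c, ?_⟩
  -- δ_{c+k} ≤ evenDer k
  have hstep : ∀ k : ℕ, lieDerivedSeries R (c + k) ≤ evenDer R₀ k := by
    intro k
    induction k with
    | zero => exact part1
    | succ k ih =>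
        show lieDerivedSeries R ((c + k) + 1) ≤ _
        rw [lds_succ]
        show _ ≤ AddSubgroup.closure _
        apply AddSubgroup.closure_mono
        rintro x ⟨a, ha, b, hb, rfl⟩
        exact ⟨a, ih ha, b, ih hb, rfl⟩
  have hfin : evenDer R₀ c ≤ (⊥ : AddSubgroup R) := by
    calc evenDer R₀ c ≤ evenLCS R₀ c := evenDer_le h00 c
      _ ≤ superCentral R₀ R₁ c ⊓ R₀ := evenLCS_le h00 c
      _ ≤ superCentral R₀ R₁ c := inf_le_left
      _ = ⊥ := hΓ
  exact le_bot_iff.1 ((hstep c).trans hfin)
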